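/- arXiv:1310.8532 — 2 statements merged into one kernel-verified Lean document; each statement's English description precedes it below -/
import Mathlib

section
/- Suppose f is continuous on (0,∞), ∫₀^∞ γ f(γ) dγ < ∞, ∫₁^∞ log(γ) f(γ) dγ < ∞, and t·f(t)/(1 − F(t)) → ∞ as t → ∞. For each λ > 0 consider the on-off scheme that transmits with constant power Q(λ) = G(λ)/(1 − F(λ)) whenever the channel gain exceeds λ, achieving rate R(λ) = ∫_λ^∞ log(1 + γ·Q(λ)) f(γ) dγ. Then R(λ)/(λ·G(λ)) → 1 as λ → ∞; i.e. the on-off signaling of (E4B12) is asymptotically capacity-achieving. (Theorem 2, achievability part, l = ∞ case.) -/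
open MeasureTheory Filter Set Topology

/-- The cumulative distribution function `F(t) = ∫₀^t f(γ) dγ`. -/
noncomputable def Fcdf (f : ℝ → ℝ) (t : ℝ) : ℝ := ∫ γ in (0:ℝ)..t, f γ

/-- The average-power function `G(t) = ∫_t^∞ (1/t − 1/γ) f(γ) dγ`. -/
noncomputable def Gfun (f : ℝ → ℝ) (t : ℝ) : ℝ := ∫ γ in Set.Ioi t, (1/t - 1/γ) * f γ

/-!
Write `S(t) = ∫_t^∞ f` for the survival function and `H(t) = ∫_t^∞ (γ - t) f(γ) dγ` for the
stop-loss transform, and `Q = G(λ)/S(λ)`. Since `log (1 + γ Q)` lies between `log (1 + λ Q)` and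
`γ Q` on `γ > λ`, the ratio `R(λ)/(λ G(λ))` is squeezed between `log (1 + x)/x` with
`x = λ G(λ)/S(λ)` and `1 + H(λ)/(λ S(λ))`; moreover `0 < x ≤ H(λ)/(λ S(λ))`. So everything
reduces to `H(λ)/(λ S(λ)) → 0`, which follows from L'Hôpital's rule: `H' = -S` and
`(λ S)' = S - λ f`, whose ratio `1/(λ f/S - 1)` tends to `0` because the generalized failure rate
`λ f/S` tends to infinity.
-/

theorem hasDerivAt_integral_Ioi {g : ℝ → ℝ} {a t : ℝ} (hg : IntegrableOn g (Ioi a))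
    (hgc : ContinuousOn g (Ioi a)) (ht : a < t) :
    HasDerivAt (fun s => ∫ x in Ioi s, g x) (-g t) t := by
  have hFTC : HasDerivAt (fun s => ∫ x in a..s, g x) (g t) t :=
    intervalIntegral.integral_hasDerivAt_right
      ((intervalIntegrable_iff_integrableOn_Ioc_of_le ht.le).2 (hg.mono_set Ioc_subset_Ioi_self))
      (hgc.stronglyMeasurableAtFilter isOpen_Ioi t ht) (hgc.continuousAt (Ioi_mem_nhds ht))
  refine (hFTC.const_sub (∫ x in Ioi a, g x)).congr_of_eventuallyEq ?_
  filter_upwards [Ioi_mem_nhds ht] with s hs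
  rw [← intervalIntegral.integral_Ioi_sub_Ioi hg hs.le, sub_sub_cancel]

theorem Real.tendsto_log_one_add_div_self :
    Tendsto (fun y : ℝ => Real.log (1 + y) / y) (𝓝[>] 0) (𝓝 1) := by
  have h : HasDerivAt (fun y : ℝ => Real.log (1 + y)) 1 0 := by
    simpa using ((hasDerivAt_id (0 : ℝ)).const_add 1).log (by norm_num)
  refine ((hasDerivAt_iff_tendsto_slope.1 h).mono_left
    (nhdsWithin_mono _ fun y hy => ne_of_gt hy)).congr fun y => ?_
  simp [slope_def_field]

theorem Real.log_one_add_le_self {x : ℝ} (hx : -1 < x) : Real.log (1 + x) ≤ x := by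
  linarith [Real.log_le_sub_one_of_pos (by linarith : 0 < 1 + x)]

noncomputable def survivalFun (f : ℝ → ℝ) (t : ℝ) : ℝ := ∫ γ in Ioi t, f γ

noncomputable def stopLoss (f : ℝ → ℝ) (t : ℝ) : ℝ := ∫ γ in Ioi t, (γ - t) * f γ

section
variable {f : ℝ → ℝ} {t : ℝ}

theorem survivalFun_eq_one_sub_Fcdf (hint : IntegrableOn f (Ioi 0))
    (hone : ∫ γ in Ioi (0 : ℝ), f γ = 1) (ht : 0 ≤ t) : survivalFun f t = 1 - Fcdf f t := by
  rw [← hone, Fcdf, survivalFun,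
    ← intervalIntegral.integral_interval_add_Ioi hint (hint.mono_set (Ioi_subset_Ioi ht))]
  ring

theorem survivalFun_nonneg (hnn : ∀ x, 0 ≤ f x) (t : ℝ) : 0 ≤ survivalFun f t :=
  setIntegral_nonneg measurableSet_Ioi fun x _ => hnn x

theorem stopLoss_eq (hint : IntegrableOn f (Ioi 0))
    (hmean : IntegrableOn (fun γ => γ * f γ) (Ioi 0)) (ht : 0 ≤ t) :
    stopLoss f t = (∫ γ in Ioi t, γ * f γ) - t * survivalFun f t := by
  rw [survivalFun, ← integral_const_mul, ← integral_sub
    (hmean.mono_set (Ioi_subset_Ioi ht)) ((hint.mono_set (Ioi_subset_Ioi ht)).const_mul t)]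
  simp only [stopLoss, sub_mul]

theorem hasDerivAt_survivalFun (hint : IntegrableOn f (Ioi 0))
    (hcont : ContinuousOn f (Ioi 0)) (ht : 0 < t) : HasDerivAt (survivalFun f) (-f t) t :=
  hasDerivAt_integral_Ioi hint hcont ht

theorem hasDerivAt_stopLoss (hint : IntegrableOn f (Ioi 0)) (hcont : ContinuousOn f (Ioi 0))
    (hmean : IntegrableOn (fun γ => γ * f γ) (Ioi 0)) (ht : 0 < t) :
    HasDerivAt (stopLoss f) (-survivalFun f t) t := by
  have h := (hasDerivAt_integral_Ioi hmean (continuousOn_id.mul hcont) ht).sub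
    ((hasDerivAt_id' t).fun_mul (hasDerivAt_survivalFun hint hcont ht))
  rw [show -(t * f t) - (1 * survivalFun f t + t * -f t) = -survivalFun f t by ring] at h
  refine h.congr_of_eventuallyEq ?_
  filter_upwards [Ioi_mem_nhds ht] with s hs
  exact stopLoss_eq hint hmean hs.le

theorem mul_survivalFun_le_integral (hnn : ∀ x, 0 ≤ f x) (hint : IntegrableOn f (Ioi 0))
    (hmean : IntegrableOn (fun γ => γ * f γ) (Ioi 0)) (ht : 0 ≤ t) :
    t * survivalFun f t ≤ ∫ γ in Ioi t, γ * f γ := by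
  rw [survivalFun, ← integral_const_mul]
  exact setIntegral_mono_on ((hint.mono_set (Ioi_subset_Ioi ht)).const_mul t)
    (hmean.mono_set (Ioi_subset_Ioi ht)) measurableSet_Ioi
    fun γ hγ => mul_le_mul_of_nonneg_right (le_of_lt hγ) (hnn γ)

theorem tendsto_mul_survivalFun_atTop (hnn : ∀ x, 0 ≤ f x) (hint : IntegrableOn f (Ioi 0))
    (hmean : IntegrableOn (fun γ => γ * f γ) (Ioi 0)) :
    Tendsto (fun t => t * survivalFun f t) atTop (𝓝 0) := by
  refine tendsto_of_tendsto_of_tendsto_of_le_of_le' tendsto_const_nhds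
    (tendsto_integral_Ioi_zero (f := fun γ => γ * f γ) (μ := volume) tendsto_id) ?_ ?_
  · filter_upwards [eventually_ge_atTop 0] with t ht
    exact mul_nonneg ht (survivalFun_nonneg hnn t)
  · filter_upwards [eventually_ge_atTop 0] with t ht
    exact mul_survivalFun_le_integral hnn hint hmean ht

theorem tendsto_stopLoss_atTop (hnn : ∀ x, 0 ≤ f x) (hint : IntegrableOn f (Ioi 0))
    (hmean : IntegrableOn (fun γ => γ * f γ) (Ioi 0)) :
    Tendsto (stopLoss f) atTop (𝓝 0) := by
  have h := (tendsto_integral_Ioi_zero (f := fun γ => γ * f γ) (μ := volume) tendsto_id).sub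
    (tendsto_mul_survivalFun_atTop hnn hint hmean)
  rw [sub_zero] at h
  refine h.congr' ?_
  filter_upwards [eventually_ge_atTop 0] with t ht
  exact (stopLoss_eq hint hmean ht).symm

theorem tendsto_stopLoss_div_mul_survivalFun (hnn : ∀ x, 0 ≤ f x)
    (hcont : ContinuousOn f (Ioi 0)) (hint : IntegrableOn f (Ioi 0))
    (hmean : IntegrableOn (fun γ => γ * f γ) (Ioi 0))
    (hGFR : Tendsto (fun t => t * f t / survivalFun f t) atTop atTop) :
    Tendsto (fun t => stopLoss f t / (t * survivalFun f t)) atTop (𝓝 0) := by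
  have hS : ∀ᶠ t in atTop, 0 < survivalFun f t := by
    filter_upwards [hGFR.eventually_gt_atTop 0] with t ht
    refine (survivalFun_nonneg hnn t).lt_of_ne fun h => ?_
    rw [← h, div_zero] at ht
    exact lt_irrefl 0 ht
  have hratio : Tendsto (fun t => (t * f t / survivalFun f t - 1)⁻¹) atTop (𝓝 0) :=
    (tendsto_atTop_add_const_right _ (-1) hGFR).inv_tendsto_atTop
  refine HasDerivAt.lhopital_zero_atTop (f' := fun t => -survivalFun f t)
    (g' := fun t => survivalFun f t - t * f t) ?_ ?_ ?_
    (tendsto_stopLoss_atTop hnn hint hmean) (tendsto_mul_survivalFun_atTop hnn hint hmean)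
    (hratio.congr' ?_)
  · filter_upwards [eventually_gt_atTop 0] with t ht
    exact hasDerivAt_stopLoss hint hcont hmean ht
  · filter_upwards [eventually_gt_atTop 0] with t ht
    simpa [sub_eq_add_neg] using
      (hasDerivAt_id' t).fun_mul (hasDerivAt_survivalFun hint hcont ht)
  · filter_upwards [hGFR.eventually_gt_atTop 1, hS] with t ht hSt
    rw [lt_div_iff₀ hSt, one_mul] at ht
    exact (sub_neg.2 ht).ne
  · filter_upwards [hS] with t hSt
    rw [div_sub_one hSt.ne', inv_div, ← neg_sub, div_neg, neg_div]

theorem mul_Gfun_eq (ht : 0 < t) : t * Gfun f t = ∫ γ in Ioi t, (1 - t / γ) * f γ := by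
  rw [Gfun, ← integral_const_mul]
  refine setIntegral_congr_fun measurableSet_Ioi fun γ hγ => ?_
  have hγ : 0 < γ := ht.trans hγ
  field_simp

theorem integrableOn_one_sub_div_mul (hint : IntegrableOn f (Ioi 0)) (ht : 0 < t) :
    IntegrableOn (fun γ => (1 - t / γ) * f γ) (Ioi t) := by
  refine (hint.mono_set (Ioi_subset_Ioi ht.le)).bdd_mul (c := 1) (by fun_prop) ?_
  filter_upwards [ae_restrict_mem measurableSet_Ioi] with γ hγ
  have hγ0 : 0 < γ := ht.trans hγ
  rw [Real.norm_eq_abs, abs_le]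
  constructor
  · linarith [(div_le_one hγ0).2 (le_of_lt hγ)]
  · linarith [div_nonneg ht.le hγ0.le]

theorem mul_Gfun_pos (hnn : ∀ x, 0 ≤ f x) (hint : IntegrableOn f (Ioi 0)) (ht : 0 < t)
    (hS : 0 < survivalFun f (2 * t)) : 0 < t * Gfun f t := by
  have hsub : Ioi (2 * t) ⊆ Ioi t := Ioi_subset_Ioi (by linarith)
  calc 0 < survivalFun f (2 * t) / 2 := half_pos hS
    _ = ∫ γ in Ioi (2 * t), 2⁻¹ * f γ := by rw [integral_const_mul, survivalFun, inv_mul_eq_div]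
    _ ≤ ∫ γ in Ioi (2 * t), (1 - t / γ) * f γ := by
      refine setIntegral_mono_on ((hint.mono_set (Ioi_subset_Ioi (by linarith))).const_mul _)
        ((integrableOn_one_sub_div_mul hint ht).mono_set hsub) measurableSet_Ioi fun γ hγ => ?_
      have hγ : 2 * t < γ := hγ
      have : t / γ ≤ 2⁻¹ := by rw [div_le_iff₀ (by linarith)]; linarith
      exact mul_le_mul_of_nonneg_right (by linarith) (hnn γ)
    _ ≤ ∫ γ in Ioi t, (1 - t / γ) * f γ := by
      refine setIntegral_mono_set (integrableOn_one_sub_div_mul hint ht) ?_ hsub.eventuallyLE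
      filter_upwards [ae_restrict_mem measurableSet_Ioi] with γ hγ
      have : t / γ ≤ 1 := (div_le_one (ht.trans hγ)).2 (le_of_lt hγ)
      exact mul_nonneg (by linarith) (hnn γ)
    _ = t * Gfun f t := (mul_Gfun_eq ht).symm

theorem mul_Gfun_le_stopLoss_div (hnn : ∀ x, 0 ≤ f x) (hint : IntegrableOn f (Ioi 0))
    (hmean : IntegrableOn (fun γ => γ * f γ) (Ioi 0)) (ht : 0 < t) :
    t * Gfun f t ≤ stopLoss f t / t := by
  have hH : IntegrableOn (fun γ => (γ - t) * f γ) (Ioi t) := by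
    simpa only [sub_mul] using (hmean.mono_set (Ioi_subset_Ioi ht.le)).fun_sub
      ((hint.mono_set (Ioi_subset_Ioi ht.le)).const_mul t)
  rw [mul_Gfun_eq ht, stopLoss, div_eq_inv_mul, ← integral_const_mul]
  refine setIntegral_mono_on (integrableOn_one_sub_div_mul hint ht) (hH.const_mul _)
    measurableSet_Ioi fun γ hγ => ?_
  have hγ : t < γ := hγ
  have key : 1 - t / γ ≤ t⁻¹ * (γ - t) := by
    rw [one_sub_div (ht.trans hγ).ne', inv_mul_eq_div]
    exact div_le_div_of_nonneg_left (by linarith) ht hγ.le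
  simpa only [mul_assoc] using mul_le_mul_of_nonneg_right key (hnn γ)

section
variable {Q : ℝ}

theorem log_one_add_mul_mul_le {a b : ℝ} (ha : 0 ≤ a) (hQ : 0 ≤ Q) (hb : 0 ≤ b) :
    Real.log (1 + a * Q) * b ≤ Q * (a * b) :=
  calc Real.log (1 + a * Q) * b ≤ a * Q * b :=
        mul_le_mul_of_nonneg_right (Real.log_one_add_le_self (by nlinarith)) hb
    _ = Q * (a * b) := by ring

theorem integrableOn_log_one_add_mul_mul (hnn : ∀ x, 0 ≤ f x) (hint : IntegrableOn f (Ioi 0))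
    (hmean : IntegrableOn (fun γ => γ * f γ) (Ioi 0)) (ht : 0 ≤ t) (hQ : 0 ≤ Q) :
    IntegrableOn (fun γ => Real.log (1 + γ * Q) * f γ) (Ioi t) := by
  refine Integrable.mono' ((hmean.mono_set (Ioi_subset_Ioi ht)).const_mul Q)
    ((by fun_prop : Measurable fun γ => Real.log (1 + γ * Q)).aestronglyMeasurable.mul
      (hint.mono_set (Ioi_subset_Ioi ht)).aestronglyMeasurable) ?_
  filter_upwards [ae_restrict_mem measurableSet_Ioi] with γ hγ
  have hγ : 0 ≤ γ := ht.trans (le_of_lt hγ)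
  rw [Real.norm_eq_abs, abs_of_nonneg (mul_nonneg (Real.log_nonneg (by nlinarith)) (hnn γ))]
  exact log_one_add_mul_mul_le hγ hQ (hnn γ)

theorem integral_log_one_add_mul_mul_le (hnn : ∀ x, 0 ≤ f x) (hint : IntegrableOn f (Ioi 0))
    (hmean : IntegrableOn (fun γ => γ * f γ) (Ioi 0)) (ht : 0 ≤ t) (hQ : 0 ≤ Q) :
    ∫ γ in Ioi t, Real.log (1 + γ * Q) * f γ ≤ Q * (stopLoss f t + t * survivalFun f t) := by
  rw [stopLoss_eq hint hmean ht, sub_add_cancel, ← integral_const_mul]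
  refine setIntegral_mono_on (integrableOn_log_one_add_mul_mul hnn hint hmean ht hQ)
    ((hmean.mono_set (Ioi_subset_Ioi ht)).const_mul Q) measurableSet_Ioi
    fun γ hγ => log_one_add_mul_mul_le (ht.trans (le_of_lt hγ)) hQ (hnn γ)

theorem survivalFun_mul_log_le_integral (hnn : ∀ x, 0 ≤ f x) (hint : IntegrableOn f (Ioi 0))
    (hmean : IntegrableOn (fun γ => γ * f γ) (Ioi 0)) (ht : 0 ≤ t) (hQ : 0 ≤ Q) :
    survivalFun f t * Real.log (1 + t * Q) ≤ ∫ γ in Ioi t, Real.log (1 + γ * Q) * f γ := by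
  rw [survivalFun, ← integral_mul_const]
  refine setIntegral_mono_on ((hint.mono_set (Ioi_subset_Ioi ht)).mul_const _)
    (integrableOn_log_one_add_mul_mul hnn hint hmean ht hQ) measurableSet_Ioi fun γ hγ => ?_
  rw [mul_comm]
  refine mul_le_mul_of_nonneg_right (Real.log_le_log (by positivity) ?_) (hnn γ)
  nlinarith [le_of_lt (mem_Ioi.1 hγ)]
end

theorem log_one_add_div_self_le_integral_div (hnn : ∀ x, 0 ≤ f x)
    (hint : IntegrableOn f (Ioi 0)) (hmean : IntegrableOn (fun γ => γ * f γ) (Ioi 0))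
    (ht : 0 < t) (hS : 0 < survivalFun f t) (hG : 0 < t * Gfun f t) :
    Real.log (1 + t * Gfun f t / survivalFun f t) / (t * Gfun f t / survivalFun f t) ≤
      (∫ γ in Ioi t, Real.log (1 + γ * (Gfun f t / survivalFun f t)) * f γ) / (t * Gfun f t) := by
  have hQ : 0 ≤ Gfun f t / survivalFun f t := (div_pos (pos_of_mul_pos_right hG ht.le) hS).le
  rw [div_div_eq_mul_div, mul_comm, mul_div_assoc t]
  exact div_le_div_of_nonneg_right (survivalFun_mul_log_le_integral hnn hint hmean ht.le hQ)
    hG.le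

theorem integral_div_le_one_add_stopLoss_div (hnn : ∀ x, 0 ≤ f x)
    (hint : IntegrableOn f (Ioi 0)) (hmean : IntegrableOn (fun γ => γ * f γ) (Ioi 0))
    (ht : 0 < t) (hS : 0 < survivalFun f t) (hG : 0 < t * Gfun f t) :
    (∫ γ in Ioi t, Real.log (1 + γ * (Gfun f t / survivalFun f t)) * f γ) / (t * Gfun f t) ≤
      1 + stopLoss f t / (t * survivalFun f t) := by
  have hG' : 0 < Gfun f t := pos_of_mul_pos_right hG ht.le
  calc _ ≤ Gfun f t / survivalFun f t * (stopLoss f t + t * survivalFun f t) / (t * Gfun f t) :=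
        div_le_div_of_nonneg_right
          (integral_log_one_add_mul_mul_le hnn hint hmean ht.le (div_pos hG' hS).le) hG.le
    _ = 1 + stopLoss f t / (t * survivalFun f t) := by
        field_simp [hG'.ne', hS.ne', ht.ne']
        ring
end

theorem onoff_achieves_capacity_GFR_infinite_general (f : ℝ → ℝ)
    (hnn : ∀ x, 0 ≤ f x)
    (hcont : ContinuousOn f (Set.Ioi (0:ℝ)))
    (hint : IntegrableOn f (Set.Ioi (0:ℝ)))
    (hone : ∫ γ in Set.Ioi (0:ℝ), f γ = 1)
    (hsupp : ∀ t > (0:ℝ), Fcdf f t < 1)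
    (hmean : IntegrableOn (fun γ => γ * f γ) (Set.Ioi (0:ℝ)))
    (hGFR : Tendsto (fun t => t * f t / (1 - Fcdf f t)) atTop atTop) :
    Tendsto
      (fun lam =>
        (∫ γ in Set.Ioi lam,
            Real.log (1 + γ * (Gfun f lam / (1 - Fcdf f lam))) * f γ) /
          (lam * Gfun f lam))
      atTop (nhds 1) := by
  have hSF : ∀ t > 0, survivalFun f t = 1 - Fcdf f t := fun t ht =>
    survivalFun_eq_one_sub_Fcdf hint hone ht.le
  have hS : ∀ t > 0, 0 < survivalFun f t := fun t ht => by
    rw [hSF t ht]; linarith [hsupp t ht]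
  have hG : ∀ t > 0, 0 < t * Gfun f t := fun t ht =>
    mul_Gfun_pos hnn hint ht (hS _ (by positivity))
  have hr : Tendsto (fun t => stopLoss f t / (t * survivalFun f t)) atTop (𝓝 0) := by
    refine tendsto_stopLoss_div_mul_survivalFun hnn hcont hint hmean (hGFR.congr' ?_)
    filter_upwards [eventually_gt_atTop 0] with t ht
    rw [hSF t ht]
  have hx : Tendsto (fun t => t * Gfun f t / survivalFun f t) atTop (𝓝[>] 0) := by
    refine tendsto_nhdsWithin_of_tendsto_nhds_of_eventually_within _
      (tendsto_of_tendsto_of_tendsto_of_le_of_le' tendsto_const_nhds hr ?_ ?_) ?_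
    all_goals filter_upwards [eventually_gt_atTop 0] with t ht
    · exact (div_pos (hG t ht) (hS t ht)).le
    · rw [← div_div]
      exact div_le_div_of_nonneg_right (mul_Gfun_le_stopLoss_div hnn hint hmean ht) (hS t ht).le
    · exact div_pos (hG t ht) (hS t ht)
  refine tendsto_of_tendsto_of_tendsto_of_le_of_le' (Real.tendsto_log_one_add_div_self.comp hx)
    (by simpa using hr.const_add 1) ?_ ?_
  all_goals filter_upwards [eventually_gt_atTop 0] with t ht
  · rw [← hSF t ht]
    exact log_one_add_div_self_le_integral_div hnn hint hmean ht (hS t ht) (hG t ht)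
  · rw [← hSF t ht]
    exact integral_div_le_one_add_stopLoss_div hnn hint hmean ht (hS t ht) (hG t ht)

/-- Theorem 2 (achievability, `l = ∞` case): the on-off scheme transmitting with
constant power `Q(λ) = G(λ)/(1 − F(λ))` whenever the channel gain exceeds `λ`
achieves rate `R(λ) = ∫_λ^∞ log(1 + γ·Q(λ)) f(γ) dγ` with `R(λ)/(λ·G(λ)) → 1`,
i.e. the on-off signaling (E4B12) is asymptotically capacity-achieving. -/
theorem onoff_achieves_capacity_GFR_infinite (f : ℝ → ℝ)
    (hnn : ∀ x, 0 ≤ f x)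
    (hzero : ∀ x ≤ (0:ℝ), f x = 0)
    (hcont : ContinuousOn f (Set.Ioi (0:ℝ)))
    (hint : IntegrableOn f (Set.Ioi (0:ℝ)))
    (hone : ∫ γ in Set.Ioi (0:ℝ), f γ = 1)
    (hsupp : ∀ t > (0:ℝ), Fcdf f t < 1)
    (hmean : IntegrableOn (fun γ => γ * f γ) (Set.Ioi (0:ℝ)))
    (hlog : IntegrableOn (fun γ => Real.log γ * f γ) (Set.Ioi (1:ℝ)))
    (hGFR : Tendsto (fun t => t * f t / (1 - Fcdf f t)) atTop atTop) :
    Tendsto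
      (fun lam =>
        (∫ γ in Set.Ioi lam,
            Real.log (1 + γ * (Gfun f lam / (1 - Fcdf f lam))) * f γ) /
          (lam * Gfun f lam))
      atTop (nhds 1) :=
  onoff_achieves_capacity_GFR_infinite_general f hnn hcont hint hone hsupp hmean hGFR
end

section
/- Fix K ≥ 1 and an index k, and assume each distribution has infinite support, i.e. F_i(t) < 1 for all t > 0 and all i, and that ∫₁^∞ log(γ) f_k(γ) dγ < ∞. Let (λ^{(n)})_n be a sequence of vectors in (0,∞)^K with λ_i^{(n)} → ∞ for every i = 1,…,K. Then the ratio [∫_{λ_k^{(n)}}^∞ log(h/λ_k^{(n)}) · ∏_{i≠k} F_i((λ_i^{(n)}/λ_k^{(n)})·h) · f_k(h) dh] / [∫_{λ_k^{(n)}}^∞ log(h/λ_k^{(n)}) f_k(h) dh] tends to 1 as n → ∞. (Asymptotic equivalence (E317): at low power the sum-rate-optimal rate of user k coincides with the single-user water-filling rate; this is the analytic core of Theorem 1, stating that the MAC capacity region is asymptotically the rectangle of single-user capacities.) -/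
/-!
Write `L = λ_k` and `P(h) = ∏_{i ≠ k} F_i((λ_i / L) h)`. On `h > L` the factor `P` is monotone
with values in `[0, 1]`, so it is squeezed between `P(L) = ∏_{i ≠ k} F_i(λ_i)` and `1`; the ratio is
a weighted average of `P` against the weight `log (h / L) f_k(h) ≥ 0`, hence lies in the same
interval. Since every `λ_i → ∞`, the lower end `∏_{i ≠ k} F_i(λ_i)` tends to `1`.
-/

open MeasureTheory Filter Set Topology

section Fcdf

variable {f : ℝ → ℝ}

lemma Fcdf_nonneg (hnn : ∀ x, 0 ≤ f x) {t : ℝ} (ht : 0 ≤ t) : 0 ≤ Fcdf f t :=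
  intervalIntegral.integral_nonneg ht fun x _ => hnn x

lemma Fcdf_add_integral_Ioi (hint : IntegrableOn f (Ioi 0)) {t : ℝ} (ht : 0 ≤ t) :
    Fcdf f t + ∫ x in Ioi t, f x = ∫ x in Ioi 0, f x := by
  rw [Fcdf, intervalIntegral.integral_of_le ht,
    ← setIntegral_union (Ioc_disjoint_Ioi le_rfl) measurableSet_Ioi
      (hint.mono_set Ioc_subset_Ioi_self) (hint.mono_set (Ioi_subset_Ioi ht)),
    Ioc_union_Ioi_eq_Ioi ht]

lemma Fcdf_le_integral_Ioi (hnn : ∀ x, 0 ≤ f x) (hint : IntegrableOn f (Ioi 0)) {t : ℝ}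
    (ht : 0 ≤ t) : Fcdf f t ≤ ∫ x in Ioi 0, f x := by
  rw [← Fcdf_add_integral_Ioi hint ht]
  exact le_add_of_nonneg_right (setIntegral_nonneg measurableSet_Ioi fun x _ => hnn x)

lemma integral_Ioi_pos_of_Fcdf_lt (hint : IntegrableOn f (Ioi 0)) {t : ℝ} (ht : 0 ≤ t)
    (hlt : Fcdf f t < ∫ x in Ioi 0, f x) : 0 < ∫ x in Ioi t, f x := by
  linarith [Fcdf_add_integral_Ioi hint ht]

lemma monotoneOn_Fcdf (hnn : ∀ x, 0 ≤ f x) (hint : IntegrableOn f (Ioi 0)) :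
    MonotoneOn (Fcdf f) (Ici 0) := by
  intro a ha b _ hab
  rw [Fcdf, Fcdf, intervalIntegral.integral_of_le ha,
    intervalIntegral.integral_of_le (ha.trans hab)]
  exact setIntegral_mono_set (hint.mono_set Ioc_subset_Ioi_self) (Eventually.of_forall hnn)
    (Ioc_subset_Ioc_right hab).eventuallyLE

lemma tendsto_Fcdf_atTop (hint : IntegrableOn f (Ioi 0)) :
    Tendsto (Fcdf f) atTop (𝓝 (∫ x in Ioi 0, f x)) :=
  intervalIntegral_tendsto_integral_Ioi 0 hint tendsto_id

end Fcdf

lemma monotoneOn_prod_Fcdf {ι : Type*} (s : Finset ι) {F : ι → ℝ → ℝ}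
    (hnn : ∀ i x, 0 ≤ F i x) (hint : ∀ i, IntegrableOn (F i) (Ioi 0)) {a : ι → ℝ}
    (ha : ∀ i, 0 ≤ a i) :
    MonotoneOn (fun h => ∏ i ∈ s, Fcdf (F i) (a i * h)) (Ici 0) := by
  intro x hx y hy hxy
  have hax : ∀ i, 0 ≤ a i * x := fun i => mul_nonneg (ha i) hx
  have hay : ∀ i, 0 ≤ a i * y := fun i => mul_nonneg (ha i) hy
  exact Finset.prod_le_prod (fun i _ => Fcdf_nonneg (hnn i) (hax i))
    fun i _ => monotoneOn_Fcdf (hnn i) (hint i) (hax i) (hay i)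
      (mul_le_mul_of_nonneg_left hxy (ha i))

lemma setIntegral_mul_div_setIntegral_mem_Icc {α : Type*} [MeasurableSpace α] {μ : Measure α}
    {s : Set α} (hs : MeasurableSet s) {w g : α → ℝ} (hw : IntegrableOn w s μ)
    (hw0 : ∀ x ∈ s, 0 ≤ w x) (hpos : 0 < ∫ x in s, w x ∂μ)
    (hg : AEStronglyMeasurable g (μ.restrict s)) {a b : ℝ} (hab : ∀ x ∈ s, g x ∈ Icc a b) :
    (∫ x in s, w x * g x ∂μ) / (∫ x in s, w x ∂μ) ∈ Icc a b := by
  have hwg : IntegrableOn (fun x => w x * g x) s μ := by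
    refine hw.mul_bdd hg (c := max |a| |b|) ?_
    filter_upwards [ae_restrict_mem hs] with x hx
    exact abs_le_max_abs_abs (hab x hx).1 (hab x hx).2
  constructor
  · rw [le_div_iff₀ hpos, mul_comm, ← integral_mul_const]
    refine setIntegral_mono_on (hw.mul_const a) hwg hs fun x hx => ?_
    exact mul_le_mul_of_nonneg_left (hab x hx).1 (hw0 x hx)
  · rw [div_le_iff₀ hpos, mul_comm, ← integral_mul_const]
    refine setIntegral_mono_on hwg (hw.mul_const b) hs fun x hx => ?_
    exact mul_le_mul_of_nonneg_left (hab x hx).2 (hw0 x hx)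

section LogWeight

variable {f : ℝ → ℝ} {L : ℝ}

lemma integrableOn_log_div_mul (hint : IntegrableOn f (Ioi 0))
    (hlog : IntegrableOn (fun γ => Real.log γ * f γ) (Ioi 1)) (hL : 1 ≤ L) :
    IntegrableOn (fun h => Real.log (h / L) * f h) (Ioi L) := by
  have hsub : IntegrableOn (fun h => Real.log h * f h - Real.log L * f h) (Ioi L) :=
    (hlog.mono_set (Ioi_subset_Ioi hL)).sub
      ((hint.mono_set (Ioi_subset_Ioi (by linarith))).const_mul _)
  refine hsub.congr_fun (fun h (hh : L < h) => ?_) measurableSet_Ioi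
  rw [Real.log_div (by linarith) (by linarith)]
  ring

lemma log_div_mul_nonneg (hnn : ∀ x, 0 ≤ f x) (hL : 0 < L) {h : ℝ} (hh : L ≤ h) :
    0 ≤ Real.log (h / L) * f h :=
  mul_nonneg (Real.log_nonneg ((one_le_div hL).mpr hh)) (hnn h)

lemma integral_log_div_mul_pos (hnn : ∀ x, 0 ≤ f x) (hint : IntegrableOn f (Ioi 0))
    (hlog : IntegrableOn (fun γ => Real.log γ * f γ) (Ioi 1)) (hL : 1 ≤ L)
    (htail : 0 < ∫ x in Ioi (2 * L), f x) :
    0 < ∫ h in Ioi L, Real.log (h / L) * f h := by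
  have hw := integrableOn_log_div_mul hint hlog hL
  have hlog_two : Real.log 2 * ∫ x in Ioi (2 * L), f x ≤
      ∫ h in Ioi (2 * L), Real.log (h / L) * f h := by
    rw [← integral_const_mul]
    refine setIntegral_mono_on ((hint.mono_set (Ioi_subset_Ioi (by linarith))).const_mul _)
      (hw.mono_set (Ioi_subset_Ioi (by linarith))) measurableSet_Ioi fun h (hh : 2 * L < h) => ?_
    refine mul_le_mul_of_nonneg_right (Real.log_le_log two_pos ?_) (hnn h)
    rw [le_div_iff₀ (by linarith)]
    linarith
  have hshrink : ∫ h in Ioi (2 * L), Real.log (h / L) * f h ≤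
      ∫ h in Ioi L, Real.log (h / L) * f h := by
    refine setIntegral_mono_set hw ?_ (Ioi_subset_Ioi (by linarith)).eventuallyLE
    filter_upwards [ae_restrict_mem measurableSet_Ioi] with h (hh : L < h)
    exact log_div_mul_nonneg hnn (by linarith) hh.le
  have := mul_pos (Real.log_pos one_lt_two) htail
  linarith

end LogWeight

lemma rate_ratio_mem_Icc {ι : Type*} (s : Finset ι) {F : ι → ℝ → ℝ} (hnn : ∀ i x, 0 ≤ F i x)
    (hint : ∀ i, IntegrableOn (F i) (Ioi 0)) (hone : ∀ i, ∫ γ in Ioi 0, F i γ = 1)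
    {f : ℝ → ℝ} (hfnn : ∀ x, 0 ≤ f x) (hfint : IntegrableOn f (Ioi 0))
    (hflog : IntegrableOn (fun γ => Real.log γ * f γ) (Ioi 1)) {a : ι → ℝ} (ha : ∀ i, 0 ≤ a i)
    {L : ℝ} (hL : 1 ≤ L) (htail : 0 < ∫ x in Ioi (2 * L), f x) :
    (∫ h in Ioi L, Real.log (h / L) * (∏ i ∈ s, Fcdf (F i) (a i / L * h)) * f h) /
        (∫ h in Ioi L, Real.log (h / L) * f h) ∈ Icc (∏ i ∈ s, Fcdf (F i) (a i)) 1 := by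
  have hL0 : 0 < L := by linarith
  have hP := monotoneOn_prod_Fcdf s hnn hint fun i => div_nonneg (ha i) hL0.le
  have hIoi : Ioi L ⊆ Ici 0 := fun h (hh : L < h) => le_of_lt (hL0.trans hh)
  simp_rw [mul_right_comm (Real.log _)]
  refine setIntegral_mul_div_setIntegral_mem_Icc measurableSet_Ioi
    (integrableOn_log_div_mul hfint hflog hL)
    (fun h hh => log_div_mul_nonneg hfnn hL0 (le_of_lt hh))
    (integral_log_div_mul_pos hfnn hfint hflog hL htail)
    (aemeasurable_restrict_of_monotoneOn measurableSet_Ioi (hP.mono hIoi)).aestronglyMeasurable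
    fun h (hh : L < h) => ⟨?_, ?_⟩
  · have := hP hL0.le (hIoi hh) hh.le
    simpa only [div_mul_cancel₀ _ hL0.ne'] using this
  · have harg : ∀ i, 0 ≤ a i / L * h := fun i =>
      mul_nonneg (div_nonneg (ha i) hL0.le) (hIoi hh)
    exact Finset.prod_le_one (fun i _ => Fcdf_nonneg (hnn i) (harg i)) fun i _ =>
      hone i ▸ Fcdf_le_integral_Ioi (hnn i) (hint i) (harg i)

theorem mac_rate_integral_asymptotic_general (K : ℕ) (k : Fin K)
    (f : Fin K → ℝ → ℝ)
    (hnn : ∀ i x, 0 ≤ f i x)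
    (hint : ∀ i, IntegrableOn (f i) (Set.Ioi (0:ℝ)))
    (hone : ∀ i, ∫ γ in Set.Ioi (0:ℝ), f i γ = 1)
    (hsupp : ∀ i, ∀ t > (0:ℝ), Fcdf (f i) t < 1)
    (hlog : IntegrableOn (fun γ => Real.log γ * f k γ) (Set.Ioi (1:ℝ)))
    (lam : ℕ → Fin K → ℝ) (hlam : ∀ n i, 0 < lam n i)
    (htend : ∀ i, Tendsto (fun n => lam n i) atTop atTop) :
    Tendsto
      (fun n =>
        (∫ h in Set.Ioi (lam n k),
            Real.log (h / lam n k) *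
              (∏ i ∈ Finset.univ.erase k, Fcdf (f i) (lam n i / lam n k * h)) *
                f k h) /
          ∫ h in Set.Ioi (lam n k), Real.log (h / lam n k) * f k h)
      atTop (nhds 1) := by
  have hlower :
      Tendsto (fun n => ∏ i ∈ Finset.univ.erase k, Fcdf (f i) (lam n i)) atTop (𝓝 1) := by
    simpa [hone] using tendsto_finsetProd (Finset.univ.erase k) fun i _ =>
      (tendsto_Fcdf_atTop (hint i)).comp (htend i)
  have hbounds : ∀ᶠ n in atTop,
      (∫ h in Set.Ioi (lam n k), Real.log (h / lam n k) *
          (∏ i ∈ Finset.univ.erase k, Fcdf (f i) (lam n i / lam n k * h)) * f k h) /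
        (∫ h in Set.Ioi (lam n k), Real.log (h / lam n k) * f k h) ∈
      Icc (∏ i ∈ Finset.univ.erase k, Fcdf (f i) (lam n i)) 1 := by
    filter_upwards [(htend k).eventually_ge_atTop 1] with n hn
    have htail : 0 < ∫ x in Ioi (2 * lam n k), f k x :=
      integral_Ioi_pos_of_Fcdf_lt (hint k) (by linarith) ((hone k).symm ▸ hsupp k _ (by linarith))
    exact rate_ratio_mem_Icc _ hnn hint hone (hnn k) (hint k) hlog (fun i => (hlam n i).le) hn htail
  exact tendsto_of_tendsto_of_tendsto_of_le_of_le' hlower tendsto_const_nhds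
    (hbounds.mono fun _ h => h.1) (hbounds.mono fun _ h => h.2)

/-- Asymptotic equivalence (E317): along any sequence of multiplier vectors all of
whose coordinates tend to `∞`, the sum-rate-optimal rate `R*_k` of (E303) is
asymptotically equal to the single-user water-filling rate. -/
theorem mac_rate_integral_asymptotic (K : ℕ) (hK : 1 ≤ K) (k : Fin K)
    (f : Fin K → ℝ → ℝ)
    (hmeas : ∀ i, Measurable (f i))
    (hnn : ∀ i x, 0 ≤ f i x)
    (hzero : ∀ i, ∀ x ≤ (0:ℝ), f i x = 0)
    (hint : ∀ i, IntegrableOn (f i) (Set.Ioi (0:ℝ)))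
    (hone : ∀ i, ∫ γ in Set.Ioi (0:ℝ), f i γ = 1)
    (hsupp : ∀ i, ∀ t > (0:ℝ), Fcdf (f i) t < 1)
    (hlog : IntegrableOn (fun γ => Real.log γ * f k γ) (Set.Ioi (1:ℝ)))
    (lam : ℕ → Fin K → ℝ) (hlam : ∀ n i, 0 < lam n i)
    (htend : ∀ i, Tendsto (fun n => lam n i) atTop atTop) :
    Tendsto
      (fun n =>
        (∫ h in Set.Ioi (lam n k),
            Real.log (h / lam n k) *
              (∏ i ∈ Finset.univ.erase k, Fcdf (f i) (lam n i / lam n k * h)) *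
                f k h) /
          ∫ h in Set.Ioi (lam n k), Real.log (h / lam n k) * f k h)
      atTop (nhds 1) :=
  mac_rate_integral_asymptotic_general K k f hnn hint hone hsupp hlog lam hlam htend
end
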